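/- arXiv:math/9911123 — 6 statements merged into one kernel-verified Lean document; each statement's English description precedes it below -/
import Mathlib

section
/- Suppose R ∈ B satisfies R^m = 0 for a natural number m, α is a nonzero rational number, and R solves the master equation δ_α(R) = (1/2)·{R,R}, where δ_α := d + α·∂. Then the truncated exponential exp(R/α) := Σ_{k=0}^{m+1} R^k/(α^k·k!) satisfies δ_α( Σ_{k=0}^{m+1} R^k/(α^k·k!) ) = 0. -/
/-!
Put `δ = d + α ∂`. The BV relation reads `δ (x y) = δ x · y + x · δ y - α {x, y}` with `{x, ·}`
a derivation, which gives
`δ (R ^ (n + 2)) = (n + 2) R ^ (n + 1) δ R - (n + 2).choose 2 · α R ^ n {R, R}`.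
With the master equation `δ R = ½ {R, R}`, the term of index `n + 2` of `δ (exp (R / α))`
becomes `h (n + 1) - h n`, where `h j = R ^ j {R, R} / (2 α ^ (j + 1) j!)`, and the term of
index `1` is `h 0`; so the sum telescopes to `h m = 0`.
-/

section BVPower

variable {S A : Type*} [CommRing S] [CommRing A] [Algebra S A]

theorem map_one_eq_zero_of_map_mul_sub_derivation (Δ : A → A) (b : A → Derivation S A A)
    (hΔ : ∀ x y, Δ (x * y) = Δ x * y + x * Δ y - b x y) : Δ 1 = 0 := by
  simpa [Derivation.map_one_eq_zero] using hΔ 1 1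

theorem map_pow_add_two_of_map_mul_sub_derivation (Δ : A → A) (b : A → Derivation S A A)
    (hΔ : ∀ x y, Δ (x * y) = Δ x * y + x * Δ y - b x y) (x : A) (n : ℕ) :
    Δ (x ^ (n + 2)) = (n + 2) • (x ^ (n + 1) * Δ x) - (n + 2).choose 2 • (x ^ n * b x x) := by
  induction n with
  | zero =>
    rw [pow_two, hΔ]
    simp only [zero_add, pow_one, pow_zero, one_mul, Nat.choose_self, one_smul]
    ring
  | succ n ih =>
    rw [pow_succ', hΔ, ih, (b x).leibniz_pow, Nat.choose_succ_succ' (n + 2), Nat.choose_one_right]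
    simp only [smul_eq_mul, nsmul_eq_mul]
    push_cast
    ring

end BVPower

section MasterEquation

variable {K B : Type*} [Field K] [CharZero K] [CommRing B] [Algebra K B]

def truncatedExp (α : K) (R : B) (n : ℕ) : B :=
  ∑ k ∈ Finset.range n, (α ^ k * (k.factorial : K))⁻¹ • R ^ k

theorem map_truncatedExp_eq_zero_of_master (δ : B →ₗ[K] B) (b : B → Derivation K B B) {α : K}
    (hα : α ≠ 0) (hδ : ∀ x y, δ (x * y) = δ x * y + x * δ y - α • b x y)
    {R : B} {m : ℕ} (hR : R ^ m = 0) (hmaster : δ R = (1 / 2 : K) • b R R) :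
    δ (truncatedExp α R (m + 2)) = 0 := by
  set h : ℕ → B := fun j ↦ (2 * α ^ (j + 1) * (j.factorial : K))⁻¹ • (R ^ j * b R R)
  have hterm (j : ℕ) : (α ^ (j + 2) * ((j + 2).factorial : K))⁻¹ • δ (R ^ (j + 2))
      = h (j + 1) - h j := by
    rw [map_pow_add_two_of_map_mul_sub_derivation δ (fun x ↦ α • b x) hδ, hmaster]
    simp only [h, Derivation.smul_apply, mul_smul_comm, Nat.factorial_succ]
    have hj1 : (j + 1 : K) ≠ 0 := Nat.cast_add_one_ne_zero j
    have hj2 : (j + 1 + 1 : K) ≠ 0 := by exact_mod_cast Nat.succ_ne_zero (j + 1)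
    match_scalars
    · field_simp
      ring
    · rw [Nat.cast_choose_two]
      push_cast
      field_simp
      ring
  have hδ1 := map_one_eq_zero_of_map_mul_sub_derivation δ (fun x ↦ α • b x) hδ
  simp only [truncatedExp, map_sum, map_smul]
  rw [Finset.sum_range_succ', Finset.sum_range_succ', Finset.sum_congr rfl fun j _ ↦ hterm j,
    Finset.sum_range_sub]
  simp only [h, hR, hδ1, hmaster, zero_mul, smul_zero, zero_sub, zero_add, add_zero, pow_one,
    pow_zero, Nat.factorial_zero, Nat.factorial_one, Nat.cast_one, mul_one, one_mul]
  module

end MasterEquation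

theorem delta_alpha_exp_master_general
    (B : Type*) [CommRing B] [Algebra ℚ B]
    (d p : B →ₗ[ℚ] B) (br : B →ₗ[ℚ] B →ₗ[ℚ] B)
    (hd : ∀ x y : B, d (x * y) = d x * y + x * d y)
    (hp : ∀ x y : B, p (x * y) = p x * y + x * p y - br x y)
    (hbr : ∀ x y z : B, br x (y * z) = br x y * z + y * br x z)
    (R : B) (m : ℕ) (hR : R ^ m = 0)
    (α : ℚ) (hα : α ≠ 0)
    (hmaster : d R + α • p R = (1 / 2 : ℚ) • br R R) :
    d (∑ k ∈ Finset.range (m + 2), (α ^ k * (k.factorial : ℚ))⁻¹ • R ^ k)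
      + α • p (∑ k ∈ Finset.range (m + 2), (α ^ k * (k.factorial : ℚ))⁻¹ • R ^ k) = 0 := by
  let b (x : B) : Derivation ℚ B B :=
    Derivation.mk' (br x) fun y z ↦ by rw [hbr, smul_eq_mul, smul_eq_mul]; ring
  have hδ (x y : B) : (d + α • p) (x * y)
      = (d + α • p) x * y + x * (d + α • p) y - α • b x y := by
    simp only [LinearMap.add_apply, LinearMap.smul_apply, hd, hp, b, Derivation.coe_mk', smul_sub,
      smul_add, add_mul, mul_add, smul_mul_assoc, mul_smul_comm]
    abel
  exact map_truncatedExp_eq_zero_of_master (d + α • p) b hα hδ hR hmaster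

/-- If `R` is nilpotent (`R^m = 0`), `α ≠ 0`, and `R` solves the master equation
`δ_α(R) = (1/2)·{R,R}` with `δ_α = d + α·∂`, then the truncated exponential
`exp(R/α) = Σ_{k=0}^{m+1} R^k/(α^k·k!)` is `δ_α`-closed. -/
theorem delta_alpha_exp_master
    (B : Type*) [CommRing B] [Algebra ℚ B]
    (d p : B →ₗ[ℚ] B) (br : B →ₗ[ℚ] B →ₗ[ℚ] B)
    (hd : ∀ x y : B, d (x * y) = d x * y + x * d y)
    (hp : ∀ x y : B, p (x * y) = p x * y + x * p y - br x y)
    (hbr : ∀ x y z : B, br x (y * z) = br x y * z + y * br x z)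
    (hp1 : p 1 = 0)
    (R : B) (m : ℕ) (hR : R ^ m = 0)
    (α : ℚ) (hα : α ≠ 0)
    (hmaster : d R + α • p R = (1 / 2 : ℚ) • br R R) :
    d (∑ k ∈ Finset.range (m + 2), (α ^ k * (k.factorial : ℚ))⁻¹ • R ^ k)
      + α • p (∑ k ∈ Finset.range (m + 2), (α ^ k * (k.factorial : ℚ))⁻¹ • R ^ k) = 0 :=
  delta_alpha_exp_master_general B d p br hd hp hbr R m hR α hα hmaster
end

section
/- For every a ∈ B, ∂( exp(ad r)(a) ) = exp(ad r)(∂(a)) + { c , exp(ad r)(a) }, where exp(ad r)(a) := Σ_{k=0}^{N−1} ad(r)^k(a)/k! and c := Σ_{n=0}^{N−1} ad(r)^n(∂(r))/(n+1)!. -/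
/-!
View `∂` and `d = ad r` as elements of the ℚ-algebra `End B`: the hypotheses say that
`[∂, d] = {∂ r, ·}` and `ad_d {u, ·} = {d u, ·}`, so `ad_dⁿ [∂, d] = {dⁿ (∂ r), ·}`.
In any ℚ-algebra, left multiplication by a nilpotent `d` is right multiplication by `d` plus
`ad_d`, two commuting nilpotent operators; exponentiating gives `exp d · a = exp(ad_d)(a) · exp d`,
that is `a · exp d = exp d · a + ((exp(ad_d) - 1) / ad_d)([a, d]) · exp d`.
For `a = ∂` the last factor is `{c, ·}`.
-/

open Finset IsNilpotent LieAlgebra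

section

attribute [local instance] LieRing.ofAssociativeRing LieAlgebra.ofAssociativeAlgebra

variable {A : Type*} [Ring A] [Algebra ℚ A]

theorem LinearMap.exp_mulRight_apply {d : A} (hd : IsNilpotent d) (a : A) :
    exp (LinearMap.mulRight ℚ d) a = a * exp d := by
  obtain ⟨k, hk⟩ := hd
  have hk' : LinearMap.mulRight ℚ d ^ k = 0 := by
    rw [LinearMap.pow_mulRight, hk, LinearMap.mulRight_zero_eq_zero]
  simp [exp_eq_sum hk, exp_eq_sum hk', LinearMap.sum_apply, LinearMap.pow_mulRight,
    Finset.mul_sum]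

theorem IsNilpotent.exp_mul_eq_exp_ad_apply_mul_exp {d : A} (hd : IsNilpotent d) (a : A) :
    exp d * a = exp (ad ℚ A d) a * exp d := by
  have hsplit : LinearMap.mulLeft ℚ d = LinearMap.mulRight ℚ d + ad ℚ A d := by
    rw [ad_eq_lmul_left_sub_lmul_right, Pi.sub_apply, add_sub_cancel]
  have hcomm : Commute (LinearMap.mulRight ℚ d) (ad ℚ A d) := by
    rw [ad_eq_lmul_left_sub_lmul_right]
    exact (LinearMap.commute_mulLeft_right d d).symm.sub_right (Commute.refl _)
  have hR : IsNilpotent (LinearMap.mulRight ℚ d) := (LinearMap.isNilpotent_mulRight_iff ℚ d).2 hd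
  calc exp d * a = Algebra.lmul ℚ A (exp d) a := rfl
    _ = exp (LinearMap.mulRight ℚ d) (exp (ad ℚ A d) a) := by
        rw [map_exp hd]
        change exp (LinearMap.mulLeft ℚ d) a = _
        rw [hsplit, exp_add_of_commute hcomm hR (ad_nilpotent_of_nilpotent hd)]
        rfl
    _ = exp (ad ℚ A d) a * exp d := LinearMap.exp_mulRight_apply hd _

theorem Module.End.exp_apply_eq_add_sum {M : Type*} [AddCommGroup M] [Module ℚ M]
    {T : Module.End ℚ M} (hT : IsNilpotent T) {m : M} {K : ℕ} (hK : (T ^ K) (T m) = 0) :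
    exp T m = m + ∑ n ∈ range K, ((n + 1).factorial : ℚ)⁻¹ • (T ^ n) (T m) := by
  have hK' : (T ^ (K + 1)) • m = 0 := by
    rwa [_root_.pow_succ, Module.End.smul_def, Module.End.mul_apply]
  rw [← Module.End.smul_def, exp_smul_eq_sum hK' hT, sum_range_succ', add_comm]
  simp [_root_.pow_succ]

theorem IsNilpotent.mul_exp_eq_exp_mul_add {d : A} (hd : IsNilpotent d) (a : A) {K : ℕ}
    (hK : (ad ℚ A d ^ K) ⁅a, d⁆ = 0) :
    a * exp d = exp d * a
      + (∑ n ∈ range K, ((n + 1).factorial : ℚ)⁻¹ • (ad ℚ A d ^ n) ⁅a, d⁆) * exp d := by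
  have had : ad ℚ A d a = -⁅a, d⁆ := by rw [ad_apply, ← lie_skew]
  have hexp := Module.End.exp_apply_eq_add_sum (ad_nilpotent_of_nilpotent hd)
    (m := a) (K := K) (by rw [had, map_neg, hK, neg_zero])
  simp only [had, map_neg, smul_neg, sum_neg_distrib, ← sub_eq_add_neg] at hexp
  rw [exp_mul_eq_exp_ad_apply_mul_exp hd, hexp, sub_mul]
  abel

variable {R M : Type*} [CommRing R] [AddCommGroup M] [Module R M]
  {br : M →ₗ[R] M →ₗ[R] M} {r : M}

theorem lie_eq_of_map_bracket {p : Module.End R M}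
    (hder : ∀ x, p (br r x) = br (p r) x + br r (p x)) :
    ⁅p, br r⁆ = br (p r) := by
  ext x
  rw [Ring.lie_def, LinearMap.sub_apply, Module.End.mul_apply, Module.End.mul_apply, hder,
    add_sub_cancel_right]

theorem ad_bracket_apply (hjac : ∀ u v, br r (br u v) = br (br r u) v + br u (br r v)) (u : M) :
    ad R (Module.End R M) (br r) (br u) = br (br r u) := by
  ext v
  rw [ad_apply, Ring.lie_def, LinearMap.sub_apply, Module.End.mul_apply, Module.End.mul_apply,
    hjac, add_sub_cancel_right]

theorem ad_bracket_pow_apply (hjac : ∀ u v, br r (br u v) = br (br r u) v + br u (br r v))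
    (n : ℕ) (u : M) : (ad R (Module.End R M) (br r) ^ n) (br u) = br ((br r ^ n) u) := by
  induction n with
  | zero => rfl
  | succ n ih =>
    rw [_root_.pow_succ', Module.End.mul_apply, ih, ad_bracket_apply hjac, _root_.pow_succ',
      Module.End.mul_apply]

end

/-- `∂(exp(ad r)(a)) = exp(ad r)(∂(a)) + {c, exp(ad r)(a)}`, where
`exp(ad r)(a) = Σ_{k<N} ad(r)^k(a)/k!` and `c = Σ_{n<N} ad(r)^n(∂ r)/(n+1)!`. -/
theorem partial_exp_ad
    (B : Type*) [CommRing B] [Algebra ℚ B]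
    (p : B →ₗ[ℚ] B) (br : B →ₗ[ℚ] B →ₗ[ℚ] B)
    (r : B) (adr : Module.End ℚ B) (hadr : ∀ x : B, adr x = br r x)
    (hder : ∀ x : B, p (br r x) = br (p r) x + br r (p x))
    (hjac : ∀ u v : B, br r (br u v) = br (br r u) v + br u (br r v))
    (N : ℕ) (hN : adr ^ N = 0) :
    ∀ a : B,
      p (∑ k ∈ Finset.range N, ((k.factorial : ℚ))⁻¹ • (adr ^ k) a)
        = (∑ k ∈ Finset.range N, ((k.factorial : ℚ))⁻¹ • (adr ^ k) (p a))
          + br (∑ n ∈ Finset.range N, (((n + 1).factorial : ℚ))⁻¹ • (adr ^ n) (p r))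
              (∑ k ∈ Finset.range N, ((k.factorial : ℚ))⁻¹ • (adr ^ k) a) := by
  intro a
  obtain rfl : adr = br r := LinearMap.ext hadr
  have hlie : ⁅p, br r⁆ = br (p r) := lie_eq_of_map_bracket hder
  have key := IsNilpotent.mul_exp_eq_exp_mul_add ⟨N, hN⟩ p (K := N)
    (by rw [hlie, ad_bracket_pow_apply hjac, hN, LinearMap.zero_apply, map_zero])
  simp only [hlie, ad_bracket_pow_apply hjac, ← map_smul, ← map_sum, exp_eq_sum hN] at key
  simpa [LinearMap.sum_apply] using LinearMap.congr_fun key a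
end

section
/- The cocycle c := Σ_{n=0}^{N−1} ad(r)^n(∂(r))/(n+1)! itself satisfies the master equation ∂(c) = (1/2)·{c, c}. -/
/-!
Put `c(t) = ((exp (t a) - 1) / a) x` with `a = ad(r)` and `x = ∂ r`, a polynomial in `t` because
`a` is nilpotent, so that `c = c(1)`. It solves `c'(t) = x + a (c(t))` with `c(0) = 0`. Since `∂`
and `a` both satisfy Leibniz rules for the bracket, `∂ x = 0` and `[∂, a] = ad(x)`, the defect
`G(t) = 2 ∂ c(t) - {c(t), c(t)}` solves `G'(t) = a (G(t))` with `G(0) = 0`, so `G = 0`. Everything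
is done coefficientwise in `t`.
-/

open Finset Finset.Nat

section CauchySquare

variable {K V W : Type*} [Field K] [AddCommGroup V] [Module K V] [AddCommGroup W] [Module K W]

/-- The coefficient of `t ^ k` in `{c(t), c(t)}`, where `c(t) = Σ c k • t ^ k`. -/
def cauchySq (br : V →ₗ[K] V →ₗ[K] W) (c : ℕ → V) (k : ℕ) : W :=
  ∑ q ∈ antidiagonal k, br (c q.1) (c q.2)

lemma sum_antidiagonal_swap_of_symm {br : V →ₗ[K] V →ₗ[K] W}
    (hsymm : ∀ u v, br u v = br v u) (f g : ℕ → V) (k : ℕ) :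
    ∑ q ∈ antidiagonal k, br (f q.1) (g q.2)
      = ∑ q ∈ antidiagonal k, br (g q.1) (f q.2) := by
  rw [← sum_antidiagonal_swap]
  exact sum_congr rfl fun q _ => hsymm _ _

/-- Product rule for the formal derivative `d/dt {c(t), c(t)} = 2 {c'(t), c(t)}`. -/
lemma succ_smul_cauchySq_succ {br : V →ₗ[K] V →ₗ[K] W} (hsymm : ∀ u v, br u v = br v u)
    (c : ℕ → V) (k : ℕ) :
    ((k + 1 : ℕ) : K) • cauchySq br c (k + 1)
      = (2 : K) •
          ∑ q ∈ antidiagonal k, br (((q.1 + 1 : ℕ) : K) • c (q.1 + 1)) (c q.2) := by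
  have hweight : ((k + 1 : ℕ) : K) • cauchySq br c (k + 1)
      = ∑ q ∈ antidiagonal (k + 1),
          (br ((q.1 : K) • c q.1) (c q.2) + br (c q.1) ((q.2 : K) • c q.2)) := by
    rw [cauchySq, smul_sum]
    refine sum_congr rfl fun q hq => ?_
    rw [← mem_antidiagonal.mp hq]
    simp only [map_smul, LinearMap.smul_apply, Nat.cast_add, add_smul]
  rw [hweight, sum_add_distrib, sum_antidiagonal_swap_of_symm hsymm c (fun j => (j : K) • c j),
    ← two_smul K, sum_antidiagonal_succ]
  simp

lemma map_cauchySq_of_derivation {br : V →ₗ[K] V →ₗ[K] V} (hsymm : ∀ u v, br u v = br v u)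
    {a : Module.End K V} (ha : ∀ u v, a (br u v) = br (a u) v + br u (a v))
    (c : ℕ → V) (k : ℕ) :
    a (cauchySq br c k) = (2 : K) • ∑ q ∈ antidiagonal k, br (a (c q.1)) (c q.2) := by
  simp only [cauchySq, map_sum, ha, sum_add_distrib]
  rw [sum_antidiagonal_swap_of_symm hsymm c (fun j => a (c j)), two_smul]

lemma sum_range_cauchySq_of_eq_zero (br : V →ₗ[K] V →ₗ[K] W) {c : ℕ → V} {n : ℕ}
    (hc : ∀ i ≥ n, c i = 0) :
    ∑ k ∈ range (2 * n), cauchySq br c k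
      = br (∑ i ∈ range n, c i) (∑ j ∈ range n, c j) := by
  simp only [cauchySq, sum_antidiagonal_eq_sum_range_succ (fun i j => br (c i) (c j)),
    Nat.succ_eq_add_one]
  rw [sum_range_diag_flip (2 * n) (fun i j => br (c i) (c j)), map_sum br, LinearMap.sum_apply]
  simp only [map_sum]
  rw [eventually_constant_sum (fun i hi => by simp [hc i hi]) (by omega : n ≤ 2 * n)]
  refine sum_congr rfl fun i hi => ?_
  rw [mem_range] at hi
  exact eventually_constant_sum (fun j hj => by simp [hc j hj]) (by omega)

end CauchySquare

section MasterEquation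

variable {K V : Type*} [Field K] [AddCommGroup V] [Module K V]
  {p a : Module.End K V} {br : V →ₗ[K] V →ₗ[K] V} {x : V}

theorem two_smul_apply_eq_cauchySq [CharZero K] (hsymm : ∀ u v, br u v = br v u)
    (ha : ∀ u v, a (br u v) = br (a u) v + br u (a v))
    (hp : ∀ y, p (a y) = br x y + a (p y)) (hpx : p x = 0) {c : ℕ → V} (hc0 : c 0 = 0)
    (hc : ∀ k, ((k + 1 : ℕ) : K) • c (k + 1) = (if k = 0 then x else 0) + a (c k)) (k : ℕ) :
    (2 : K) • p (c k) = cauchySq br c k := by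
  set G : ℕ → V := fun k => (2 : K) • p (c k) - cauchySq br c k with hG
  suffices ∀ k, G k = 0 from sub_eq_zero.mp (this k)
  have hsource : ∀ k,
      ∑ q ∈ antidiagonal k, br (if q.1 = 0 then x else 0) (c q.2) = br x (c k) := by
    intro k
    rw [sum_eq_single (0, k) (fun q hq hne => ?_) (fun h => absurd (by simp) h)]
    · simp
    · have : q.1 ≠ 0 := fun h0 => hne (Prod.ext h0 (by simpa [h0] using mem_antidiagonal.mp hq))
      simp [this]
  have hpsource : ∀ k, p (if k = 0 then x else 0) = 0 := fun k => by split_ifs <;> simp [hpx]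
  have hGrec : ∀ k, ((k + 1 : ℕ) : K) • G (k + 1) = a (G k) := by
    intro k
    have hpart : ((k + 1 : ℕ) : K) • (2 : K) • p (c (k + 1))
        = (2 : K) • br x (c k) + a ((2 : K) • p (c k)) := by
      rw [smul_comm, ← map_smul, hc, map_add, hp, hpsource, map_smul, smul_add]
      simp
    have hsq : ((k + 1 : ℕ) : K) • cauchySq br c (k + 1)
        = (2 : K) • br x (c k) + a (cauchySq br c k) := by
      simp only [succ_smul_cauchySq_succ hsymm, hc, map_add, LinearMap.add_apply,
        sum_add_distrib, hsource, map_cauchySq_of_derivation hsymm ha, smul_add]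
    simp only [hG, smul_sub, hpart, hsq, map_sub]
    abel
  intro k
  induction k with
  | zero => simp [hG, cauchySq, hc0]
  | succ k ih =>
    have h := hGrec k
    rw [ih, map_zero] at h
    exact (smul_eq_zero.mp h).resolve_left (Nat.cast_ne_zero.mpr k.succ_ne_zero)

/-- The coefficient of `t ^ k` in `((exp (t a) - 1) / a) x`. -/
def cocycleCoeff (a : Module.End K V) (x : V) : ℕ → V
  | 0 => 0
  | k + 1 => (((k + 1).factorial : K))⁻¹ • (a ^ k) x

lemma succ_smul_cocycleCoeff_succ [CharZero K] (k : ℕ) :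
    ((k + 1 : ℕ) : K) • cocycleCoeff a x (k + 1)
      = (if k = 0 then x else 0) + a (cocycleCoeff a x k) := by
  rcases k with _ | k
  · simp [cocycleCoeff]
  · simp only [cocycleCoeff, smul_smul, Nat.factorial_succ (k + 1), Nat.cast_mul, mul_inv,
      ← mul_assoc, map_smul, pow_succ', Module.End.mul_apply]
    rw [mul_inv_cancel₀ (Nat.cast_ne_zero.mpr (k + 1).succ_ne_zero), one_mul]
    simp

lemma cocycleCoeff_eq_zero {N : ℕ} (hN : a ^ N = 0) {k : ℕ} (hk : k ≥ N + 1) :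
    cocycleCoeff a x k = 0 := by
  obtain ⟨m, rfl⟩ := Nat.exists_eq_add_of_le hk
  simp [cocycleCoeff, add_right_comm N 1 m, pow_add, hN]

lemma sum_range_cocycleCoeff (N : ℕ) :
    ∑ k ∈ range (N + 1), cocycleCoeff a x k
      = ∑ n ∈ range N, (((n + 1).factorial : K))⁻¹ • (a ^ n) x := by
  simp [sum_range_succ', cocycleCoeff]

end MasterEquation

/-- The cocycle `c = Σ_{n<N} ad(r)^n(∂ r)/(n+1)!` satisfies the master equation
`∂(c) = (1/2)·{c,c}`. -/
theorem cocycle_master_equation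
    (B : Type*) [CommRing B] [Algebra ℚ B]
    (p : B →ₗ[ℚ] B) (br : B →ₗ[ℚ] B →ₗ[ℚ] B)
    (r : B) (adr : Module.End ℚ B) (hadr : ∀ x : B, adr x = br r x)
    (hppr : p (p r) = 0)
    (hder : ∀ x : B, p (br r x) = br (p r) x + br r (p x))
    (hjac : ∀ u v : B, br r (br u v) = br (br r u) v + br u (br r v))
    (N : ℕ) (hN : adr ^ N = 0)
    (hsymm : ∀ u v : B, br u v = br v u) :
    p (∑ n ∈ Finset.range N, (((n + 1).factorial : ℚ))⁻¹ • (adr ^ n) (p r))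
      = (1 / 2 : ℚ) •
          br (∑ n ∈ Finset.range N, (((n + 1).factorial : ℚ))⁻¹ • (adr ^ n) (p r))
             (∑ n ∈ Finset.range N, (((n + 1).factorial : ℚ))⁻¹ • (adr ^ n) (p r)) := by
  set c := cocycleCoeff adr (p r)
  have hcoeff : ∀ k, (2 : ℚ) • p (c k) = cauchySq br c k :=
    two_smul_apply_eq_cauchySq hsymm (by simpa only [hadr] using hjac)
      (by simpa only [hadr] using hder) hppr rfl succ_smul_cocycleCoeff_succ
  have hsupp : ∀ k ≥ N + 1, c k = 0 := fun k hk => cocycleCoeff_eq_zero hN hk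
  rw [← sum_range_cocycleCoeff, ← sum_range_cauchySq_of_eq_zero br hsupp,
    ← eventually_constant_sum hsupp (by omega : N + 1 ≤ 2 * (N + 1)), map_sum]
  simp only [← hcoeff, ← smul_sum, smul_smul]
  norm_num
end

section
/- Suppose c ∈ B satisfies c^N = 0 and the master equation ∂(c) = (1/2)·{c, c}, and set exp(c) := Σ_{n=0}^{N−1} c^n/n!. Then for every x ∈ B, ∂( exp(c)·x ) = exp(c)·∂(x) − exp(c)·{c, x}; that is, conjugation by the multiplicative cocycle exp(c) twists ∂ by subtracting the hamiltonian vector field {c, ·}. -/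
/-! Swapping `x` and `y` in the BV relation shows that the bracket is symmetric, so `{·, x}` is a
derivation as well; hence `{exp c, x} = exp c · {c, x}`. Since `∂` is a second-order operator
whose deviation from a derivation is `-{·,·}`, one gets
`∂(c^n) = n c^(n-1) ∂c - (n choose 2) c^(n-2) {c,c}` and therefore
`∂(exp c) = exp c · (∂c - ½{c,c})`, which vanishes by the master equation. The BV relation for
`exp c · x` then gives the twisting formula. -/

open Finset
open scoped Nat

noncomputable def expPartialSum {A : Type*} [Ring A] [Module ℚ A] (k : ℕ) (c : A) : A :=
  ∑ n ∈ range k, (n ! : ℚ)⁻¹ • c ^ n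

namespace expPartialSum

variable {A : Type*} [Ring A] [Module ℚ A]

theorem succ (k : ℕ) (c : A) :
    expPartialSum (k + 1) c = expPartialSum k c + (k ! : ℚ)⁻¹ • c ^ k :=
  sum_range_succ _ _

theorem eq_exp {c : A} {N k : ℕ} (hc : c ^ N = 0) (hk : N ≤ k) :
    expPartialSum k c = IsNilpotent.exp c :=
  (IsNilpotent.exp_eq_sum (pow_eq_zero_of_le hk hc)).symm

end expPartialSum

theorem factorial_succ_inv_mul (n : ℕ) : ((n + 1)! : ℚ)⁻¹ * ((n + 1 : ℕ) : ℚ) = (n ! : ℚ)⁻¹ := by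
  rw [Nat.factorial_succ]; push_cast; field_simp

theorem factorial_add_two_inv_mul_choose_two (n : ℕ) :
    ((n + 2)! : ℚ)⁻¹ * ((n + 2).choose 2 : ℕ) = 1 / 2 * (n ! : ℚ)⁻¹ := by
  rw [Nat.cast_choose_two, Nat.factorial_succ, Nat.factorial_succ]; push_cast; field_simp; ring

section Derivation

variable {A M : Type*} [CommRing A] [Algebra ℚ A] [AddCommGroup M] [Module A M] [Module ℚ M]
  [IsScalarTower ℚ A M]

theorem Derivation.map_expPartialSum_succ (D : Derivation ℚ A M) (c : A) (k : ℕ) :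
    D (expPartialSum (k + 1) c) = expPartialSum k c • D c := by
  induction k with
  | zero => simp [expPartialSum]
  | succ k ih =>
    rw [expPartialSum.succ, map_add, ih, D.map_smul, D.leibniz_pow, Nat.add_sub_cancel,
      expPartialSum.succ, add_smul (expPartialSum k c), smul_assoc,
      ← Nat.cast_smul_eq_nsmul ℚ (k + 1), smul_smul, factorial_succ_inv_mul]

theorem Derivation.map_exp (D : Derivation ℚ A M) {c : A} {N : ℕ} (hc : c ^ N = 0) :
    D (IsNilpotent.exp c) = IsNilpotent.exp c • D c := by
  calc D (IsNilpotent.exp c) = D (expPartialSum (N + 1) c) := by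
        rw [expPartialSum.eq_exp hc N.le_succ]
    _ = IsNilpotent.exp c • D c := by
        rw [D.map_expPartialSum_succ, expPartialSum.eq_exp hc le_rfl]

end Derivation

namespace BV

variable {B : Type*} [CommRing B] [Algebra ℚ B] {p : B →ₗ[ℚ] B} {br : B →ₗ[ℚ] B →ₗ[ℚ] B}

theorem bracket_comm (hp : ∀ x y : B, p (x * y) = p x * y + x * p y - br x y) (x y : B) :
    br x y = br y x := by
  have hyx := hp y x
  rw [mul_comm y x] at hyx
  linear_combination hp x y - hyx

def bracketDerivation (hbr : ∀ x y z : B, br x (y * z) = br x y * z + y * br x z) (x : B) :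
    Derivation ℚ B B :=
  Derivation.mk' (br x) fun y z => by
    rw [hbr, smul_eq_mul, smul_eq_mul]; ring

theorem bracket_pow_right (hbr : ∀ x y z : B, br x (y * z) = br x y * z + y * br x z)
    (x c : B) (n : ℕ) : br x (c ^ n) = n • (c ^ (n - 1) * br x c) :=
  (bracketDerivation hbr x).leibniz_pow c n

variable (hp : ∀ x y : B, p (x * y) = p x * y + x * p y - br x y)
  (hbr : ∀ x y z : B, br x (y * z) = br x y * z + y * br x z)
include hp hbr

theorem bracket_exp_left {c : B} {N : ℕ} (hc : c ^ N = 0) (x : B) :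
    br (IsNilpotent.exp c) x = IsNilpotent.exp c * br c x := by
  rw [bracket_comm hp, bracket_comm hp c]
  exact (bracketDerivation hbr x).map_exp hc

theorem map_one : p 1 = 0 := by
  have h1 : br 1 1 = 0 := (bracketDerivation hbr 1).map_one_eq_zero
  simpa [h1] using hp 1 1

theorem map_pow_add_two (c : B) (n : ℕ) :
    p (c ^ (n + 2)) = (n + 2) • (c ^ (n + 1) * p c) - (n + 2).choose 2 • (c ^ n * br c c) := by
  induction n with
  | zero => simp [hp, pow_two]; ring
  | succ n ih =>
    have hpow : br (c ^ (n + 2)) c = (n + 2) • (c ^ (n + 1) * br c c) := by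
      rw [bracket_comm hp, bracket_pow_right hbr]; rfl
    rw [pow_succ, hp, ih, hpow, Nat.choose_succ_succ (n + 2)]
    simp only [nsmul_eq_mul, Nat.choose_one_right]
    push_cast
    ring

theorem map_expPartialSum_add_two (c : B) (k : ℕ) :
    p (expPartialSum (k + 2) c) =
      expPartialSum (k + 1) c * p c - (1 / 2 : ℚ) • (expPartialSum k c * br c c) := by
  induction k with
  | zero => simp [expPartialSum, sum_range_succ, map_one hp hbr]
  | succ k ih =>
    rw [expPartialSum.succ (k + 2), map_add, ih, map_smul, map_pow_add_two hp hbr,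
      expPartialSum.succ (k + 1), expPartialSum.succ k, smul_sub,
      ← Nat.cast_smul_eq_nsmul ℚ (k + 2), ← Nat.cast_smul_eq_nsmul ℚ ((k + 2).choose 2),
      smul_smul, smul_smul, factorial_succ_inv_mul (k + 1), factorial_add_two_inv_mul_choose_two,
      mul_smul]
    simp only [add_mul, smul_add, smul_mul_assoc]
    abel

theorem map_exp {c : B} {N : ℕ} (hc : c ^ N = 0) :
    p (IsNilpotent.exp c) = IsNilpotent.exp c * (p c - (1 / 2 : ℚ) • br c c) := by
  have h := map_expPartialSum_add_two hp hbr c N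
  rwa [expPartialSum.eq_exp hc (N.le_add_right 2), expPartialSum.eq_exp hc N.le_succ,
    expPartialSum.eq_exp hc le_rfl, ← mul_smul_comm, ← mul_sub] at h

end BV

/-- If `c^N = 0` and `∂(c) = (1/2)·{c,c}`, then with `exp(c) = Σ_{n<N} c^n/n!` one has
`∂(exp(c)·x) = exp(c)·∂(x) − exp(c)·{c,x}` for every `x`. -/
theorem exp_cocycle_twists_partial
    (B : Type*) [CommRing B] [Algebra ℚ B]
    (p : B →ₗ[ℚ] B) (br : B →ₗ[ℚ] B →ₗ[ℚ] B)
    (hp : ∀ x y : B, p (x * y) = p x * y + x * p y - br x y)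
    (hbr : ∀ x y z : B, br x (y * z) = br x y * z + y * br x z)
    (c : B) (N : ℕ) (hc : c ^ N = 0)
    (hmaster : p c = (1 / 2 : ℚ) • br c c) :
    ∀ x : B,
      p ((∑ n ∈ Finset.range N, ((n.factorial : ℚ))⁻¹ • c ^ n) * x)
        = (∑ n ∈ Finset.range N, ((n.factorial : ℚ))⁻¹ • c ^ n) * p x
          - (∑ n ∈ Finset.range N, ((n.factorial : ℚ))⁻¹ • c ^ n) * br c x := by
  intro x
  have hexp : p (IsNilpotent.exp c) = 0 := by
    rw [BV.map_exp hp hbr hc, hmaster, sub_self, mul_zero]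
  rw [← IsNilpotent.exp_eq_sum hc, hp, hexp, BV.bracket_exp_left hp hbr hc, zero_mul, zero_add]
end

section
/- For every a ∈ B, exp(ad r)( ∂( exp(−ad r)(a) ) ) = ∂(a) − {c, a}, where exp(±ad r)(a) := Σ_{k=0}^{N−1} (±1)^k·ad(r)^k(a)/k! and c := Σ_{n=0}^{N−1} ad(r)^n(∂(r))/(n+1)!. -/
open Finset

private lemma exp_mul_exp {R : Type*} [Ring R] [Algebra ℚ R] (S T : R) (h : Commute S T)
    (N : ℕ) (hS : S ^ N = 0) (hT : T ^ N = 0) :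
    (∑ k ∈ range (2*N), ((k.factorial : ℚ))⁻¹ • S ^ k) *
      (∑ j ∈ range (2*N), ((j.factorial : ℚ))⁻¹ • T ^ j)
      = ∑ m ∈ range (2*N), ((m.factorial : ℚ))⁻¹ • (S + T) ^ m := by
  have hS' : ∀ k, N ≤ k → S ^ k = 0 := fun k hk => pow_eq_zero_of_le hk hS
  have hT' : ∀ j, N ≤ j → T ^ j = 0 := fun j hj => pow_eq_zero_of_le hj hT
  set f : ℕ → ℕ → R :=
    fun k j => ((k.factorial : ℚ)⁻¹ * (j.factorial : ℚ)⁻¹) • (S ^ k * T ^ j) with hf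
  have hf0 : ∀ k j, 2*N ≤ k + j → f k j = 0 := by
    intro k j hkj
    rcases le_or_gt N k with hk | hk
    · simp [hf, hS' k hk]
    · have hj : N ≤ j := by omega
      simp [hf, hT' j hj]
  have hLHS : (∑ k ∈ range (2*N), ((k.factorial : ℚ))⁻¹ • S ^ k) *
      (∑ j ∈ range (2*N), ((j.factorial : ℚ))⁻¹ • T ^ j)
      = ∑ k ∈ range (2*N), ∑ j ∈ range (2*N), f k j := by
    rw [Finset.sum_mul_sum]
    exact Finset.sum_congr rfl fun k _ => Finset.sum_congr rfl fun j _ =>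
      smul_mul_smul_comm _ _ _ _
  have hRHS : ∀ m, ((m.factorial : ℚ))⁻¹ • (S + T) ^ m
      = ∑ i ∈ range (m+1), f i (m - i) := by
    intro m
    rw [h.add_pow, Finset.smul_sum]
    refine Finset.sum_congr rfl fun i hi => ?_
    have hi' : i ≤ m := Nat.lt_succ_iff.mp (mem_range.mp hi)
    rw [← (Nat.cast_commute (m.choose i) (S ^ i * T ^ (m - i))).eq, ← nsmul_eq_mul,
      ← Nat.cast_smul_eq_nsmul ℚ, smul_smul, hf]
    congr 1
    rw [Nat.cast_choose ℚ hi']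
    have h1 : (i.factorial : ℚ) ≠ 0 := Nat.cast_ne_zero.mpr i.factorial_ne_zero
    have h2 : ((m - i).factorial : ℚ) ≠ 0 := Nat.cast_ne_zero.mpr (m - i).factorial_ne_zero
    have h3 : (m.factorial : ℚ) ≠ 0 := Nat.cast_ne_zero.mpr m.factorial_ne_zero
    field_simp
  rw [hLHS]
  have hRHS' : ∑ m ∈ range (2*N), ((m.factorial : ℚ))⁻¹ • (S + T) ^ m
      = ∑ m ∈ range (2*N), ∑ i ∈ range (m+1), f i (m - i) :=
    Finset.sum_congr rfl fun m _ => hRHS m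
  rw [hRHS']
  have square : ∑ k ∈ range (2*N), ∑ j ∈ range (2*N), f k j
      = ∑ q ∈ (range (2*N) ×ˢ range (2*N)).filter (fun q => q.1 + q.2 < 2*N),
          f q.1 q.2 := by
    rw [← Finset.sum_product']
    exact (Finset.sum_filter_of_ne (by
      intro x hx hfx
      by_contra hc
      exact hfx (hf0 x.1 x.2 (by omega)))).symm
  have tri : ∑ m ∈ range (2*N), ∑ i ∈ range (m+1), f i (m - i)
      = ∑ q ∈ (range (2*N) ×ˢ range (2*N)).filter (fun q => q.1 + q.2 < 2*N),
          f q.1 q.2 := by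
    rw [Finset.sum_sigma' (range (2*N)) (fun m => range (m+1)) (fun m i => f i (m - i))]
    refine Finset.sum_nbij' (fun p => (p.2, p.1 - p.2)) (fun q => ⟨q.1 + q.2, q.1⟩)
      ?_ ?_ ?_ ?_ ?_
    · intro p hp
      simp only [Finset.mem_sigma, mem_range] at hp
      simp only [Finset.mem_filter, Finset.mem_product, mem_range]
      omega
    · intro q hq
      simp only [Finset.mem_filter, Finset.mem_product, mem_range] at hq
      simp only [Finset.mem_sigma, mem_range]
      omega
    · intro p hp
      simp only [Finset.mem_sigma, mem_range] at hp
      have : p.2 + (p.1 - p.2) = p.1 := by omega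
      exact Sigma.ext (by simpa using this) (by simp)
    · intro q hq
      simp only [Finset.mem_filter, Finset.mem_product, mem_range] at hq
      simp
    · intro p hp
      rfl
  rw [square, tri]

/-- `exp(ad r)(∂(exp(−ad r)(a))) = ∂(a) − {c, a}`, where
`exp(±ad r)(a) = Σ_{k<N} (±1)^k·ad(r)^k(a)/k!` and `c = Σ_{n<N} ad(r)^n(∂ r)/(n+1)!`. -/
theorem exp_ad_conjugation
    (B : Type*) [CommRing B] [Algebra ℚ B]
    (p : B →ₗ[ℚ] B) (br : B →ₗ[ℚ] B →ₗ[ℚ] B)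
    (r : B) (adr : Module.End ℚ B) (hadr : ∀ x : B, adr x = br r x)
    (hder : ∀ x : B, p (br r x) = br (p r) x + br r (p x))
    (hjac : ∀ u v : B, br r (br u v) = br (br r u) v + br u (br r v))
    (N : ℕ) (hN : adr ^ N = 0) :
    ∀ a : B,
      (∑ k ∈ Finset.range N, ((k.factorial : ℚ))⁻¹ •
          (adr ^ k) (p (∑ j ∈ Finset.range N,
            ((-1 : ℚ) ^ j * ((j.factorial : ℚ))⁻¹) • (adr ^ j) a)))
        = p a - br (∑ n ∈ Finset.range N, (((n + 1).factorial : ℚ))⁻¹ • (adr ^ n) (p r)) a := by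
  intro a
  rcases Nat.eq_zero_or_pos N with hN0 | hNpos
  · subst hN0
    have ha : a = 0 := by
      have h1 := LinearMap.congr_fun hN a
      simpa using h1
    simp [ha]
  -- basic pointwise facts
  have hA' : ∀ k, N ≤ k → adr ^ k = 0 := fun k hk => pow_eq_zero_of_le hk hN
  have hpA : ∀ x : B, p (adr x) = br (p r) x + adr (p x) := by
    intro x; simp only [hadr]; exact hder x
  have hAbr : ∀ (u : B) (x : B), adr (br u x) = br (adr u) x + br u (adr x) := by
    intro u x; simp only [hadr]; exact hjac u x
  -- endomorphism-level setup
  set M : ℕ → Module.End ℚ B := fun s => br ((adr ^ s) (p r)) with hM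
  set L : Module.End ℚ (Module.End ℚ B) := LinearMap.mulLeft ℚ adr with hL
  set Rm : Module.End ℚ (Module.End ℚ B) := LinearMap.mulRight ℚ adr with hR
  have hcomm0 : Commute L Rm := LinearMap.commute_mulLeft_right adr adr
  have hcomm : Commute L (-Rm) := by
    have h := LinearMap.commute_mulLeft_right (R := ℚ) adr (-adr)
    convert h using 1
    rw [hR]; ext Y x; simp [LinearMap.mulRight_apply]
  have hLN : L ^ N = 0 := by
    rw [hL, LinearMap.pow_mulLeft, hN]
    ext x; simp
  have hnegpow : ∀ j : ℕ, (-adr) ^ j = ((-1 : ℚ) ^ j) • adr ^ j := by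
    intro j
    induction j with
    | zero => simp
    | succ k ih =>
      rw [pow_succ, pow_succ, ih, pow_succ, smul_mul_assoc, mul_neg (α := Module.End ℚ B), mul_smul,
        neg_one_smul]
  have hmRm : -Rm = LinearMap.mulRight ℚ (-adr) := by
    rw [hR]; ext Y x; simp [LinearMap.mulRight_apply]
  have hRN : (-Rm) ^ N = 0 := by
    rw [hmRm, LinearMap.pow_mulRight, hnegpow, hN, smul_zero]
    ext x; simp
  have hDp : (L + -Rm) p = -(M 0) := by
    ext x
    have h1 := hpA x
    simp only [hL, hR, hM, LinearMap.add_apply, LinearMap.neg_apply,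
      LinearMap.mulLeft_apply, LinearMap.mulRight_apply, Module.End.mul_apply,
      LinearMap.sub_apply, pow_zero, Module.End.one_apply, h1]
    abel
  have hDM : ∀ s, (L + -Rm) (M s) = M (s+1) := by
    intro s
    ext x
    simp only [hM, LinearMap.add_apply, LinearMap.neg_apply, hL, hR,
      LinearMap.mulLeft_apply, LinearMap.mulRight_apply, Module.End.mul_apply,
      LinearMap.sub_apply, pow_succ']
    rw [hAbr ((adr ^ s) (p r)) x]
    abel
  have hDpow : ∀ m, ((L + -Rm) ^ (m+1)) p = -(M m) := by
    intro m
    induction m with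
    | zero => simpa using hDp
    | succ k ih =>
      rw [pow_succ', Module.End.mul_apply, ih, map_neg, hDM]
  -- apply exp_mul_exp
  have key := LinearMap.congr_fun
    (exp_mul_exp L (-Rm) hcomm N hLN hRN) p
  -- rewrite the left side of key
  have hL_apply : ∀ (k : ℕ) (X : Module.End ℚ B), (L ^ k) X = adr ^ k * X := by
    intro k X; rw [hL, LinearMap.pow_mulLeft]; rfl
  have hR_apply : ∀ (j : ℕ) (X : Module.End ℚ B), ((-Rm) ^ j) X = X * (-adr) ^ j := by
    intro j X
    rw [hmRm, LinearMap.pow_mulRight]; rfl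
  -- E2, E2' : truncated exponentials with range 2N
  have key_lhs : ((∑ k ∈ range (2*N), ((k.factorial : ℚ))⁻¹ • L ^ k) *
        (∑ j ∈ range (2*N), ((j.factorial : ℚ))⁻¹ • (-Rm) ^ j)) p
      = (∑ k ∈ range (2*N), ((k.factorial : ℚ))⁻¹ • adr ^ k) *
        (p * (∑ j ∈ range (2*N), (((-1 : ℚ) ^ j) * ((j.factorial : ℚ))⁻¹) • adr ^ j)) := by
    rw [Module.End.mul_apply]
    have inner : (∑ j ∈ range (2*N), ((j.factorial : ℚ))⁻¹ • (-Rm) ^ j) p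
        = p * (∑ j ∈ range (2*N), (((-1 : ℚ) ^ j) * ((j.factorial : ℚ))⁻¹) • adr ^ j) := by
      rw [LinearMap.sum_apply, Finset.mul_sum]
      refine Finset.sum_congr rfl fun j _ => ?_
      simp only [LinearMap.smul_apply, hR_apply, hnegpow, mul_smul_comm, smul_smul]
      congr 1
      ring
    rw [inner, LinearMap.sum_apply, Finset.sum_mul]
    refine Finset.sum_congr rfl fun k _ => ?_
    rw [LinearMap.smul_apply, hL_apply, smul_mul_assoc]
  -- rewrite the right side of key
  have key_rhs : (∑ m ∈ range (2*N), ((m.factorial : ℚ))⁻¹ • (L + -Rm) ^ m) p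
      = p - br (∑ n ∈ range N, (((n + 1).factorial : ℚ))⁻¹ • (adr ^ n) (p r)) := by
    rw [LinearMap.sum_apply]
    simp only [LinearMap.smul_apply]
    have h2N : 2*N = (2*N - 1) + 1 := by omega
    rw [h2N, Finset.sum_range_succ']
    have h0 : (((0:ℕ).factorial : ℚ))⁻¹ • ((L + -Rm) ^ 0) p = p := by simp
    have hsum : ∑ i ∈ range (2*N - 1),
        (((i+1).factorial : ℚ))⁻¹ • ((L + -Rm) ^ (i+1)) p
        = -(br (∑ n ∈ range N, (((n + 1).factorial : ℚ))⁻¹ • (adr ^ n) (p r))) := by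
      have step1 : ∀ i, (((i+1).factorial : ℚ))⁻¹ • ((L + -Rm) ^ (i+1)) p
          = -((((i+1).factorial : ℚ))⁻¹ • M i) := by
        intro i; rw [hDpow, smul_neg]
      rw [Finset.sum_congr rfl fun i _ => step1 i, Finset.sum_neg_distrib]
      congr 1
      have hshrink : ∑ i ∈ range (2*N - 1), (((i+1).factorial : ℚ))⁻¹ • M i
          = ∑ i ∈ range N, (((i+1).factorial : ℚ))⁻¹ • M i := by
        refine (Finset.sum_subset (Finset.range_subset_range.mpr (by omega)) ?_).symm
        intro i _ hi
        have hNi : N ≤ i := by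
          simp only [mem_range, not_lt] at hi; exact hi
        simp [hM, hA' i hNi]
      rw [hshrink, map_sum]
      refine Finset.sum_congr rfl fun i _ => ?_
      rw [map_smul]
    rw [hsum, h0]
    abel
  rw [key_lhs, key_rhs] at key
  -- shrink range 2N to N on the left side
  have hshrinkE : ∑ k ∈ range (2*N), ((k.factorial : ℚ))⁻¹ • adr ^ k
      = ∑ k ∈ range N, ((k.factorial : ℚ))⁻¹ • adr ^ k := by
    refine (Finset.sum_subset (Finset.range_subset_range.mpr (by omega)) ?_).symm
    intro k _ hk
    have hk' : N ≤ k := le_of_not_gt (fun h => hk (mem_range.mpr h))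
    simp [hA' k hk']
  have hshrinkE' : ∑ j ∈ range (2*N), (((-1 : ℚ) ^ j) * ((j.factorial : ℚ))⁻¹) • adr ^ j
      = ∑ j ∈ range N, (((-1 : ℚ) ^ j) * ((j.factorial : ℚ))⁻¹) • adr ^ j := by
    refine (Finset.sum_subset (Finset.range_subset_range.mpr (by omega)) ?_).symm
    intro j _ hj
    have hj' : N ≤ j := le_of_not_gt (fun h => hj (mem_range.mpr h))
    simp [hA' j hj']
  rw [hshrinkE, hshrinkE'] at key
  -- conclude pointwise
  have final := LinearMap.congr_fun key a
  simp only [Module.End.mul_apply, LinearMap.sum_apply, LinearMap.smul_apply,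
    LinearMap.sub_apply] at final
  convert final using 2
end

section
/- Define c := Σ_{n=0}^{N−1} ad(r)^n(∂(r))/(n+1)!, exp(c) := Σ_{n=0}^{M−1} c^n/n!, exp(ad r)(a) := Σ_{k=0}^{N−1} ad(r)^k(a)/k!, and the twisted group action T(a) := exp(c)·exp(ad r)(a). Then the differential ∂ commutes with T: for every a ∈ B, ∂(T(a)) = T(∂(a)). -/
open Finset

private lemma aux_leib {B : Type*} [CommRing B] [Algebra ℚ B]
    (br : B →ₗ[ℚ] B →ₗ[ℚ] B) (adr : Module.End ℚ B)
    (hjac' : ∀ u v : B, adr (br u v) = br (adr u) v + br u (adr v)) :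
    ∀ (k : ℕ) (u v : B), (adr ^ k) (br u v)
      = ∑ i ∈ range (k+1), ((k.choose i : ℚ)) • br ((adr ^ i) u) ((adr ^ (k - i)) v) := by
  intro k
  induction k with
  | zero => intro u v; simp
  | succ k ih =>
    intro u v
    have h1 : (adr ^ (k+1)) (br u v) = adr ((adr ^ k) (br u v)) := by
      rw [pow_succ', Module.End.mul_apply]
    have hA : ∀ (j : ℕ) (x : B), adr ((adr ^ j) x) = (adr ^ (j+1)) x := by
      intro j x; rw [pow_succ', Module.End.mul_apply]
    rw [h1, ih u v, map_sum]
    have h2 : ∀ i ∈ range (k+1),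
        adr (((k.choose i : ℚ)) • br ((adr ^ i) u) ((adr ^ (k - i)) v))
        = ((k.choose i : ℚ)) • br ((adr ^ (i+1)) u) ((adr ^ (k - i)) v)
          + ((k.choose i : ℚ)) • br ((adr ^ i) u) ((adr ^ (k + 1 - i)) v) := by
      intro i hi
      rw [mem_range] at hi
      have he : k - i + 1 = k + 1 - i := by omega
      rw [map_smul, hjac' , hA, hA, he, smul_add]
    rw [sum_congr rfl h2, sum_add_distrib]
    -- RHS: split via sum_range_succ'
    have h3 : ∑ i ∈ range (k+2), (((k+1).choose i : ℚ)) • br ((adr ^ i) u) ((adr ^ (k + 1 - i)) v)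
        = (∑ i ∈ range (k+1), ((k.choose i : ℚ)) • br ((adr ^ (i+1)) u) ((adr ^ (k - i)) v))
          + (∑ i ∈ range (k+1), ((k.choose (i+1) : ℚ)) • br ((adr ^ (i+1)) u) ((adr ^ (k - i)) v)
             + br u ((adr ^ (k+1)) v)) := by
      rw [Finset.sum_range_succ']
      simp only [Nat.choose_succ_succ, Nat.cast_add, add_smul, Nat.choose_zero_right]
      rw [sum_add_distrib]
      have : ∀ i ∈ range (k+1), (k+1) - (i+1) = k - i := by intro i hi; omega
      simp only [Nat.add_sub_cancel_left, Nat.succ_sub_succ]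
      ring_nf
      simp [pow_zero]
      abel
    rw [h3]
    congr 1
    have h4 : ∑ i ∈ range (k+2), ((k.choose i : ℚ)) • br ((adr ^ i) u) ((adr ^ (k + 1 - i)) v)
        = ∑ i ∈ range (k+1), ((k.choose i : ℚ)) • br ((adr ^ i) u) ((adr ^ (k + 1 - i)) v) := by
      rw [Finset.sum_range_succ]
      simp [Nat.choose_succ_self]
    rw [← h4, Finset.sum_range_succ']
    simp only [Nat.succ_sub_succ, Nat.choose_zero_right, Nat.cast_one, one_smul,
      Nat.sub_zero, pow_zero, Module.End.one_apply]

private lemma aux_key {B : Type*} [CommRing B] [Algebra ℚ B]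
    (p : B →ₗ[ℚ] B) (br : B →ₗ[ℚ] B →ₗ[ℚ] B) (adr : Module.End ℚ B) (q : B)
    (hjac' : ∀ u v : B, adr (br u v) = br (adr u) v + br u (adr v))
    (hQ : ∀ x : B, p (adr x) = br q x + adr (p x)) :
    ∀ (k : ℕ) (x : B), p ((adr ^ k) x)
      = (adr ^ k) (p x) + ∑ s ∈ range k, ((k.choose (s+1) : ℚ)) • br ((adr ^ s) q) ((adr ^ (k - 1 - s)) x) := by
  intro k
  induction k with
  | zero => intro x; simp
  | succ k ih =>
    intro x
    have h1 : (adr ^ (k+1)) x = (adr ^ k) (adr x) := by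
      rw [pow_succ, Module.End.mul_apply]
    rw [h1, ih (adr x), hQ, map_add]
    have h2 : (adr ^ k) (adr (p x)) = (adr ^ (k+1)) (p x) := by
      rw [pow_succ, Module.End.mul_apply]
    rw [h2, aux_leib br adr hjac' k q x]
    have h3 : ∀ s ∈ range k,
        ((k.choose (s+1) : ℚ)) • br ((adr ^ s) q) ((adr ^ (k - 1 - s)) (adr x))
        = ((k.choose (s+1) : ℚ)) • br ((adr ^ s) q) ((adr ^ (k - s)) x) := by
      intro s hs
      rw [mem_range] at hs
      have : (adr ^ (k - 1 - s)) (adr x) = (adr ^ (k - s)) x := by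
        have he : k - s = (k - 1 - s) + 1 := by omega
        rw [he, pow_succ, Module.End.mul_apply]
      rw [this]
    rw [sum_congr rfl h3]
    have hmain : ∑ i ∈ range (k+1), ((k.choose i : ℚ)) • br ((adr ^ i) q) ((adr ^ (k - i)) x)
        + ∑ s ∈ range k, ((k.choose (s+1) : ℚ)) • br ((adr ^ s) q) ((adr ^ (k - s)) x)
        = ∑ s ∈ range (k+1), (((k+1).choose (s+1) : ℚ)) • br ((adr ^ s) q) ((adr ^ (k - s)) x) := by
      have h5 : ∑ s ∈ range (k+1), ((k.choose (s+1):ℚ)) • br ((adr ^ s) q) ((adr ^ (k - s)) x)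
          = ∑ s ∈ range k, ((k.choose (s+1):ℚ)) • br ((adr ^ s) q) ((adr ^ (k - s)) x) := by
        rw [sum_range_succ]
        simp [Nat.choose_succ_self]
      rw [← h5, ← sum_add_distrib]
      apply sum_congr rfl
      intro s hs
      rw [← add_smul]
      congr 1
      push_cast [Nat.choose_succ_succ]
      ring
    simp only [Nat.add_sub_cancel]
    rw [add_right_comm, hmain, add_comm]

private lemma aux_sumlem {V : Type*} [AddCommMonoid V] [Module ℚ V]
    (K : ℕ) (w : ℕ → ℚ) (g : ℕ → ℕ → V)
    (hg : ∀ n m, K ≤ n + m + 1 → g n m = 0) :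
    ∑ k ∈ range K, ∑ s ∈ range k, (w k * (k.choose (s+1) : ℚ)) • g s (k - 1 - s)
      = ∑ n ∈ range K, ∑ m ∈ range K, (w (n+m+1) * ((n+m+1).choose (n+1) : ℚ)) • g n m := by
  have hR : ∑ n ∈ range K, ∑ m ∈ range K, (w (n+m+1) * ((n+m+1).choose (n+1) : ℚ)) • g n m
      = ∑ nm ∈ (range K ×ˢ range K).filter (fun nm => nm.1 + nm.2 + 1 < K),
          (w (nm.1+nm.2+1) * ((nm.1+nm.2+1).choose (nm.1+1) : ℚ)) • g nm.1 nm.2 := by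
    rw [← Finset.sum_product']
    symm
    apply Finset.sum_subset (filter_subset _ _)
    intro nm hmem hnot
    have hz : g nm.1 nm.2 = 0 := by
      apply hg
      simp only [Finset.mem_filter, not_and, not_lt] at hnot
      exact hnot hmem
    rw [hz, smul_zero]
  rw [hR, Finset.sum_sigma']
  apply Finset.sum_nbij' (fun ks => (ks.2, ks.1 - 1 - ks.2))
    (fun nm => ⟨nm.1 + nm.2 + 1, nm.1⟩)
  · intro a ha
    simp only [Finset.mem_sigma, mem_range] at ha
    simp only [Finset.mem_filter, Finset.mem_product, mem_range]
    omega
  · intro b hb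
    simp only [Finset.mem_filter, Finset.mem_product, mem_range] at hb
    simp only [Finset.mem_sigma, mem_range]
    omega
  · intro a ha
    simp only [Finset.mem_sigma, mem_range] at ha
    obtain ⟨k, s⟩ := a
    simp only at ha ⊢
    congr 1 <;> omega
  · intro b hb
    simp only [Finset.mem_filter, Finset.mem_product, mem_range] at hb
    obtain ⟨n, m⟩ := b
    simp only
    congr 1 <;> omega
  · intro a ha
    simp only [Finset.mem_sigma, mem_range] at ha
    obtain ⟨k, s⟩ := a
    simp only at ha ⊢
    have h1 : s + (k - 1 - s) + 1 = k := by omega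
    rw [h1]

private lemma aux_sym {V : Type*} [AddCommGroup V] [Module ℚ V]
    (K : ℕ) (g : ℕ → ℕ → V) (hgs : ∀ n m, g n m = g m n)
    (α β : ℕ → ℕ → ℚ) (hab : ∀ n m, α n m + α m n = β n m + β m n) :
    ∑ n ∈ range K, ∑ m ∈ range K, α n m • g n m
      = ∑ n ∈ range K, ∑ m ∈ range K, β n m • g n m := by
  have key : ∀ γ : ℕ → ℕ → ℚ, ∑ n ∈ range K, ∑ m ∈ range K, γ n m • g n m
      = (2⁻¹ : ℚ) • ∑ n ∈ range K, ∑ m ∈ range K, (γ n m + γ m n) • g n m := by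
    intro γ
    have hswap : ∑ n ∈ range K, ∑ m ∈ range K, γ n m • g n m
        = ∑ n ∈ range K, ∑ m ∈ range K, γ m n • g n m := by
      rw [Finset.sum_comm]
      exact sum_congr rfl fun n _ => sum_congr rfl fun m _ => by rw [hgs]
    simp only [add_smul, sum_add_distrib, ← hswap, smul_add]
    rw [← add_smul]
    norm_num
  rw [key α, key β]
  congr 1
  exact sum_congr rfl fun n _ => sum_congr rfl fun m _ => by rw [hab]

/-- With `c = Σ_{n<N} ad(r)^n(∂ r)/(n+1)!`, `exp(c) = Σ_{n<M} c^n/n!`,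
`exp(ad r)(a) = Σ_{k<N} ad(r)^k(a)/k!` and the twisted group action
`T(a) := exp(c)·exp(ad r)(a)`, the differential `∂` commutes with `T`:
`∂(T(a)) = T(∂(a))` for every `a`. -/
theorem partial_commutes_with_twisted_action
    (B : Type*) [CommRing B] [Algebra ℚ B]
    (p : B →ₗ[ℚ] B) (br : B →ₗ[ℚ] B →ₗ[ℚ] B)
    (hp : ∀ x y : B, p (x * y) = p x * y + x * p y - br x y)
    (hsymm : ∀ u v : B, br u v = br v u)
    (hbr : ∀ x y z : B, br x (y * z) = br x y * z + y * br x z)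
    (r : B) (adr : Module.End ℚ B) (hadr : ∀ x : B, adr x = br r x)
    (hppr : p (p r) = 0)
    (hder : ∀ x : B, p (br r x) = br (p r) x + br r (p x))
    (hjac : ∀ u v : B, br r (br u v) = br (br r u) v + br u (br r v))
    (N : ℕ) (hN : adr ^ N = 0)
    (c : B) (hc : c = ∑ n ∈ Finset.range N, (((n + 1).factorial : ℚ))⁻¹ • (adr ^ n) (p r))
    (M : ℕ) (hcM : c ^ M = 0)
    (T : B → B)
    (hT : ∀ a : B, T a = (∑ n ∈ Finset.range M, ((n.factorial : ℚ))⁻¹ • c ^ n)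
        * (∑ k ∈ Finset.range N, ((k.factorial : ℚ))⁻¹ • (adr ^ k) a)) :
    ∀ a : B, p (T a) = T (p a) := by
  -- degenerate cases
  by_cases hM0 : M = 0
  · subst hM0
    have h1 : (1 : B) = 0 := by simpa using hcM
    have triv : ∀ x : B, x = 0 := fun x => by rw [← mul_one x, h1, mul_zero]
    intro a
    rw [triv (p (T a)), triv (T (p a))]
  by_cases hN0 : N = 0
  · have triv : ∀ x : B, x = 0 := by
      intro x
      have h2 : (adr ^ N) x = 0 := by rw [hN]; rfl
      rw [hN0, pow_zero] at h2
      simpa using h2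
    intro a
    rw [triv (p (T a)), triv (T (p a))]
  have hM1 : 1 ≤ M := by omega
  have hN1 : 1 ≤ N := by omega
  -- basic facts
  have hA0 : ∀ (n : ℕ), N ≤ n → ∀ x : B, (adr ^ n) x = 0 := by
    intro n hn x
    have h1 : adr ^ n = adr ^ (n - N) * adr ^ N := by
      rw [← pow_add]; congr 1; omega
    rw [h1, Module.End.mul_apply, hN]
    simp
  have hjac' : ∀ u v : B, adr (br u v) = br (adr u) v + br u (adr v) := by
    intro u v
    simp only [hadr]
    exact hjac u v
  have hQ : ∀ x : B, p (adr x) = br (p r) x + adr (p x) := by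
    intro x
    rw [hadr, hder, hadr]
  have KEY := aux_key p br adr (p r) hjac' hQ
  have hbr1 : ∀ x : B, br x 1 = 0 := by
    intro x
    have h := hbr x 1 1
    simp only [mul_one, one_mul] at h
    linear_combination -h
  have hbr1' : ∀ x : B, br (1 : B) x = 0 := fun x => by rw [hsymm]; exact hbr1 x
  have hp1 : p (1 : B) = 0 := by
    have h := hp 1 1
    simp only [mul_one, one_mul, hbr1] at h
    linear_combination -h
  have smul_cancel : ∀ (q : ℚ), q ≠ 0 → ∀ {x : B}, q • x = 0 → x = 0 := by
    intro q hq x hx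
    have h2 := congrArg (fun z => q⁻¹ • z) hx
    simpa [smul_smul, inv_mul_cancel₀ hq] using h2
  -- the bracket-coefficient function
  set g : B → ℕ → ℕ → B := fun x n m => br ((adr ^ n) (p r)) ((adr ^ m) x) with hg
  have hgz : ∀ (x : B) (n m : ℕ), 2 * N ≤ n + m + 1 → g x n m = 0 := by
    intro x n m hnm
    rcases le_or_gt N n with h | h
    · rw [hg]; simp only; rw [hA0 n h]; simp
    · rw [hg]; simp only; rw [hA0 m (by omega)]; simp
  -- extension of truncated sums
  have hcext : ∀ L, N ≤ L →
      c = ∑ n ∈ range L, (((n + 1).factorial : ℚ))⁻¹ • (adr ^ n) (p r) := by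
    intro L hL
    rw [hc]
    apply Finset.sum_subset (Finset.range_subset_range.mpr hL)
    intro n _ hnot
    rw [hA0 n (by rw [mem_range] at hnot; omega), smul_zero]
  have hEext : ∀ L, N ≤ L → ∀ x : B,
      (∑ k ∈ range N, ((k.factorial : ℚ))⁻¹ • (adr ^ k) x)
        = ∑ k ∈ range L, ((k.factorial : ℚ))⁻¹ • (adr ^ k) x := by
    intro L hL x
    apply Finset.sum_subset (Finset.range_subset_range.mpr hL)
    intro n _ hnot
    rw [hA0 n (by rw [mem_range] at hnot; omega), smul_zero]
  -- coefficient identity for L1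
  have hcoef1 : ∀ n m : ℕ, (((n+m+1).factorial : ℚ))⁻¹ * (((n+m+1).choose (n+1) : ℚ))
      = (((n+1).factorial : ℚ))⁻¹ * ((m.factorial : ℚ))⁻¹ := by
    intro n m
    have h := Nat.choose_mul_factorial_mul_factorial (show n+1 ≤ n+m+1 by omega)
    rw [show n+m+1-(n+1) = m by omega] at h
    have h1 : ((n+m+1).factorial : ℚ) ≠ 0 := Nat.cast_ne_zero.mpr (Nat.factorial_ne_zero _)
    have h2 : (((n+1)).factorial : ℚ) ≠ 0 := Nat.cast_ne_zero.mpr (Nat.factorial_ne_zero _)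
    have h3 : ((m.factorial : ℚ)) ≠ 0 := Nat.cast_ne_zero.mpr (Nat.factorial_ne_zero _)
    field_simp
    rw [← h]
    push_cast
    ring
  -- expansion of br c y
  have hb2 : ∀ y : B, br c y
      = ∑ n ∈ range N, (((n+1).factorial : ℚ))⁻¹ • br ((adr ^ n) (p r)) y := by
    intro y
    conv_lhs => rw [hc]
    rw [map_sum, LinearMap.sum_apply]
    apply sum_congr rfl
    intro n _
    rw [map_smul, LinearMap.smul_apply]
  -- expansion of br c (E x)  (with an arbitrary range L for the second factor)
  have hbrcE : ∀ (L : ℕ) (x : B), br c (∑ k ∈ range L, ((k.factorial : ℚ))⁻¹ • (adr ^ k) x)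
      = ∑ n ∈ range N, ∑ m ∈ range L,
          ((((n+1).factorial : ℚ))⁻¹ * ((m.factorial : ℚ))⁻¹) • g x n m := by
    intro L x
    rw [hb2]
    apply sum_congr rfl
    intro n _
    rw [map_sum, Finset.smul_sum]
    apply sum_congr rfl
    intro m _
    rw [map_smul, smul_smul]
  -- shrinking double sums from range (2N) to range N
  have hsh : ∀ (x : B) (γ : ℕ → ℕ → ℚ),
      ∑ n ∈ range (2*N), ∑ m ∈ range (2*N), γ n m • g x n m
        = ∑ n ∈ range N, ∑ m ∈ range N, γ n m • g x n m := by
    intro x γ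
    rw [← Finset.sum_product', ← Finset.sum_product']
    symm
    apply Finset.sum_subset
    · exact Finset.product_subset_product (Finset.range_subset_range.mpr (by omega))
        (Finset.range_subset_range.mpr (by omega))
    · intro nm _ hnot
      simp only [Finset.mem_product, mem_range, not_and_or, not_lt] at hnot
      have hz : g x nm.1 nm.2 = 0 := by
        rcases hnot with h | h
        · rw [hg]; simp only; rw [hA0 _ h]; simp
        · rw [hg]; simp only; rw [hA0 _ h]; simp
      rw [hz, smul_zero]
  have hsh' : ∀ (x : B) (γ : ℕ → ℕ → ℚ),
      ∑ n ∈ range N, ∑ m ∈ range (2*N), γ n m • g x n m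
        = ∑ n ∈ range N, ∑ m ∈ range N, γ n m • g x n m := by
    intro x γ
    apply sum_congr rfl
    intro n _
    symm
    apply Finset.sum_subset (Finset.range_subset_range.mpr (by omega))
    intro m _ hnot
    rw [mem_range, not_lt] at hnot
    have hz : g x n m = 0 := by
      rw [hg]; simp only; rw [hA0 _ hnot]; simp
    rw [hz, smul_zero]
  -- L1 : p (E x) = E (p x) + br c (E x)
  have pE : ∀ x : B, p (∑ k ∈ range N, ((k.factorial : ℚ))⁻¹ • (adr ^ k) x)
      = (∑ k ∈ range N, ((k.factorial : ℚ))⁻¹ • (adr ^ k) (p x))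
        + br c (∑ k ∈ range N, ((k.factorial : ℚ))⁻¹ • (adr ^ k) x) := by
    intro x
    rw [hEext (2*N) (by omega) x, map_sum]
    have h1 : ∀ k ∈ range (2*N), p (((k.factorial : ℚ))⁻¹ • (adr ^ k) x)
        = ((k.factorial : ℚ))⁻¹ • (adr ^ k) (p x)
          + ∑ s ∈ range k, (((k.factorial : ℚ))⁻¹ * ((k.choose (s+1) : ℚ))) • g x s (k - 1 - s) := by
      intro k _
      rw [map_smul, KEY k x, smul_add, Finset.smul_sum]
      congr 1
      apply sum_congr rfl
      intro s _
      rw [smul_smul]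
    rw [sum_congr rfl h1, sum_add_distrib]
    congr 1
    · exact (hEext (2*N) (by omega) (p x)).symm
    rw [aux_sumlem (2*N) (fun k => ((k.factorial : ℚ))⁻¹) (g x) (hgz x)]
    rw [hsh x, hbrcE (2*N) x, hsh' x]
    apply sum_congr rfl
    intro n _
    apply sum_congr rfl
    intro m _
    rw [hcoef1 n m]
  -- coefficient identity for L3
  have hcoef2 : ∀ n m : ℕ,
      ((((n+m+1)+1).factorial : ℚ))⁻¹ * (((n+m+1).choose (n+1) : ℚ))
        + ((((m+n+1)+1).factorial : ℚ))⁻¹ * (((m+n+1).choose (m+1) : ℚ))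
      = (1/2 : ℚ) * ((((n+1).factorial : ℚ))⁻¹ * (((m+1).factorial : ℚ))⁻¹)
        + (1/2 : ℚ) * ((((m+1).factorial : ℚ))⁻¹ * (((n+1).factorial : ℚ))⁻¹) := by
    intro n m
    have hsym2 : (m+n+1).choose (m+1) = (n+m+1).choose n := by
      rw [show m+n+1 = n+m+1 by omega, ← Nat.choose_symm (show n ≤ n+m+1 by omega),
        show n+m+1-n = m+1 by omega]
    have hpas : (n+m+1).choose (n+1) + (n+m+1).choose n = (n+m+2).choose (n+1) := by
      rw [add_comm]
      exact (Nat.choose_succ_succ (n+m+1) n).symm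
    have h := Nat.choose_mul_factorial_mul_factorial (show n+1 ≤ n+m+2 by omega)
    rw [show n+m+2-(n+1) = m+1 by omega] at h
    have hq2 : (((n+m+2).choose (n+1) : ℚ)) * (((n+1).factorial : ℚ)) * (((m+1).factorial : ℚ))
        = (((n+m+2).factorial : ℚ)) := by exact_mod_cast h
    have hpq : (((n+m+1).choose (n+1) : ℚ)) + (((n+m+1).choose n : ℚ))
        = (((n+m+2).choose (n+1) : ℚ)) := by exact_mod_cast hpas
    rw [hsym2, show (m+n+1)+1 = (n+m+1)+1 by omega, show (n+m+1)+1 = n+m+2 from rfl]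
    have h1 : ((n+m+2).factorial : ℚ) ≠ 0 := Nat.cast_ne_zero.mpr (Nat.factorial_ne_zero _)
    have h2 : (((n+1)).factorial : ℚ) ≠ 0 := Nat.cast_ne_zero.mpr (Nat.factorial_ne_zero _)
    have h3 : (((m+1)).factorial : ℚ) ≠ 0 := Nat.cast_ne_zero.mpr (Nat.factorial_ne_zero _)
    have key : (((n+m+2).factorial : ℚ))⁻¹ * (((n+m+2).choose (n+1) : ℚ))
        = ((((n+1)).factorial : ℚ))⁻¹ * ((((m+1)).factorial : ℚ))⁻¹ := by
      field_simp
      linear_combination hq2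
    linear_combination key + (((n+m+2).factorial : ℚ))⁻¹ * hpq
  -- L3 : br c c = 2 • p c
  have pchalf : br c c = (2 : ℚ) • p c := by
    have pc_exp : p c = ∑ n ∈ range N, ∑ m ∈ range N,
        ((1/2 : ℚ) * ((((n+1).factorial : ℚ))⁻¹ * (((m+1).factorial : ℚ))⁻¹)) • g (p r) n m := by
      have s1 : p c = ∑ n ∈ range (2*N), ∑ s ∈ range n,
          ((((n+1).factorial : ℚ))⁻¹ * ((n.choose (s+1) : ℚ))) • g (p r) s (n - 1 - s) := by
        conv_lhs => rw [hcext (2*N) (by omega)]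
        rw [map_sum]
        apply sum_congr rfl
        intro n _
        rw [map_smul, KEY n (p r), hppr, map_zero, zero_add, Finset.smul_sum]
        apply sum_congr rfl
        intro s _
        rw [smul_smul]
      rw [s1, aux_sumlem (2*N) (fun k => (((k+1).factorial : ℚ))⁻¹) (g (p r)) (hgz (p r))]
      rw [aux_sym (2*N) (g (p r)) (fun n m => by rw [hg]; simp only; rw [hsymm])
        _ (fun n m => (1/2 : ℚ) * ((((n+1).factorial : ℚ))⁻¹ * (((m+1).factorial : ℚ))⁻¹))
        (fun n m => hcoef2 n m)]
      exact hsh (p r) _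
    have brcc_exp : br c c = ∑ n ∈ range N, ∑ m ∈ range N,
        (((((n+1)).factorial : ℚ))⁻¹ * ((((m+1)).factorial : ℚ))⁻¹) • g (p r) n m := by
      rw [hb2 c]
      apply sum_congr rfl
      intro n _
      conv_lhs => rw [hc]
      rw [map_sum, Finset.smul_sum]
      apply sum_congr rfl
      intro m _
      rw [map_smul, smul_smul]
    rw [brcc_exp, pc_exp, Finset.smul_sum]
    apply sum_congr rfl
    intro n _
    rw [Finset.smul_sum]
    apply sum_congr rfl
    intro m _
    rw [smul_smul]
    congr 1
    ring
  -- power lemmas for c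
  have brpow : ∀ (n : ℕ) (y : B), br (c^(n+1)) y = ((n : ℚ)+1) • (c^n * br c y) := by
    intro n
    induction n with
    | zero => intro y; simp
    | succ n ih =>
      intro y
      rw [pow_succ c (n+1), hsymm, hbr, hsymm y (c^(n+1)), hsymm y c, ih y, smul_mul_assoc]
      have h2 : c^n * br c y * c = c^(n+1) * br c y := by ring
      rw [h2]
      have h3 : ((n : ℚ)+1) • (c^(n+1) * br c y) + (1:ℚ) • (c^(n+1) * br c y)
          = (((n+1 : ℕ) : ℚ)+1) • (c^(n+1) * br c y) := by
        rw [← add_smul]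
        push_cast
        ring_nf
      rw [← h3, one_smul]
  have brMz : ∀ y : B, c^(M-1) * br c y = 0 := by
    intro y
    have h := brpow (M-1) y
    rw [show M - 1 + 1 = M by omega, hcM] at h
    rw [hsymm, map_zero] at h
    have h2 : ((M - 1 : ℕ) : ℚ) + 1 ≠ 0 := by positivity
    exact smul_cancel _ h2 h.symm
  have ppow : ∀ n : ℕ, p (c^(n+1))
      = ((n : ℚ)+1) • (c^n * p c) - ((n : ℚ)*((n : ℚ)+1)) • (c^(n-1) * p c) := by
    intro n
    induction n with
    | zero => simp
    | succ n ih =>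
      have h1 : c^(n+1+1) = c * c^(n+1) := by rw [pow_succ']
      rw [h1, hp c (c^(n+1)), ih, hsymm c (c^(n+1)), brpow n c, pchalf]
      rcases n with _ | m
      · simp only [Nat.zero_eq, Nat.cast_zero, Nat.cast_one, pow_zero, pow_one,
          Nat.cast_ofNat, Nat.sub_self, zero_mul, zero_smul, sub_zero, Nat.add_sub_cancel]
        simp only [Algebra.smul_def, map_add, map_mul, map_one, map_natCast, map_ofNat]
        push_cast
        ring
      · simp only [Nat.add_sub_cancel]
        simp only [Algebra.smul_def, map_add, map_mul, map_one, map_natCast, map_ofNat]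
        push_cast
        ring
  have hfc : ∀ n : ℕ, (((n+1).factorial : ℚ))⁻¹ * ((n : ℚ)+1) = ((n.factorial : ℚ))⁻¹ := by
    intro n
    have h2 : ((n.factorial : ℚ)) ≠ 0 := Nat.cast_ne_zero.mpr (Nat.factorial_ne_zero _)
    rw [Nat.factorial_succ]
    push_cast
    rw [mul_inv]
    field_simp
  have hc1 : c^(M-1) * p c = 0 := by
    have h := brMz c
    rw [pchalf, mul_smul_comm] at h
    exact smul_cancel 2 (by norm_num) h
  have hc2 : 2 ≤ M → c^(M-2) * p c = 0 := by
    intro hM2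
    have h := ppow (M-1)
    rw [show M-1+1 = M by omega, hcM, map_zero] at h
    rw [show M-1-1 = M-2 by omega, hc1, smul_zero, zero_sub] at h
    have h2 : ((M-1 : ℕ) : ℚ) * (((M-1 : ℕ) : ℚ)+1) ≠ 0 := by
      have h4 : (1 : ℚ) ≤ ((M-1 : ℕ) : ℚ) := by
        have h5 : 1 ≤ M - 1 := by omega
        exact_mod_cast h5
      positivity
    have h3 : (((M-1 : ℕ) : ℚ) * (((M-1 : ℕ) : ℚ)+1)) • (c^(M-2) * p c) = 0 :=
      neg_eq_zero.mp h.symm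
    exact smul_cancel _ h2 h3
  -- telescoping function
  have peq0 : p (∑ n ∈ range M, ((n.factorial : ℚ))⁻¹ • c ^ n) = 0 := by
    set f : ℕ → B := fun m => if m = 0 then 0 else (((m-1).factorial : ℚ))⁻¹ • (c^(m-1) * p c)
      with hf
    have hstep : ∀ n : ℕ, (((n+1).factorial : ℚ))⁻¹ • p (c^(n+1)) = f (n+1) - f n := by
      intro n
      rw [ppow n, smul_sub, smul_smul, smul_smul, hfc n]
      have hf1 : f (n+1) = ((n.factorial : ℚ))⁻¹ • (c^n * p c) := by
        rw [hf]; simp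
      rw [hf1]
      congr 1
      rcases n with _ | m
      · rw [hf]; simp
      · have hf2 : f (m+1) = ((m.factorial : ℚ))⁻¹ • (c^m * p c) := by rw [hf]; simp
        rw [hf2, Nat.add_sub_cancel]
        have h2 : (((m+1+1).factorial : ℚ))⁻¹ * (((m+1 : ℕ) : ℚ) * (((m+1 : ℕ) : ℚ)+1))
            = ((m.factorial : ℚ))⁻¹ := by
          have hm : ((m.factorial : ℚ)) ≠ 0 := Nat.cast_ne_zero.mpr (Nat.factorial_ne_zero _)
          have a1 : ((m : ℚ)+1) ≠ 0 := by positivity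
          have a2 : ((m : ℚ)+2) ≠ 0 := by positivity
          rw [Nat.factorial_succ (m+1), Nat.factorial_succ m]
          push_cast
          field_simp
        rw [h2]
    rw [map_sum]
    have hterm : ∀ n ∈ range M, p (((n.factorial : ℚ))⁻¹ • c^n)
        = ((n.factorial : ℚ))⁻¹ • p (c^n) := by
      intro n _; rw [map_smul]
    rw [sum_congr rfl hterm, show M = (M-1)+1 by omega, Finset.sum_range_succ']
    simp only [pow_zero, hp1, smul_zero, add_zero]
    rw [sum_congr rfl (fun i _ => hstep i), Finset.sum_range_sub f (M-1)]
    rcases Nat.lt_or_ge M 2 with hM2 | hM2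
    · have hM1' : M = 1 := by omega
      rw [hM1']
      simp [hf]
    · have hz := hc2 hM2
      have hfM : f (M-1) = (((M-2).factorial : ℚ))⁻¹ • (c^(M-2) * p c) := by
        rw [hf]
        simp only [if_neg (show ¬(M-1 = 0) by omega)]
        rw [show M-1-1 = M-2 by omega]
      rw [hfM, hz, smul_zero, hf]
      simp
  have bre : ∀ y : B, br (∑ n ∈ range M, ((n.factorial : ℚ))⁻¹ • c ^ n) y
      = (∑ n ∈ range M, ((n.factorial : ℚ))⁻¹ • c ^ n) * br c y := by
    intro y
    have h1 : br (∑ n ∈ range M, ((n.factorial : ℚ))⁻¹ • c ^ n) y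
        = ∑ n ∈ range M, ((n.factorial : ℚ))⁻¹ • br (c^n) y := by
      rw [map_sum, LinearMap.sum_apply]
      apply sum_congr rfl
      intro n _
      rw [map_smul, LinearMap.smul_apply]
    rw [h1, Finset.sum_mul]
    have h2 : ∀ n ∈ range M, (((n.factorial : ℚ))⁻¹ • c ^ n) * br c y
        = ((n.factorial : ℚ))⁻¹ • (c^n * br c y) := by
      intro n _
      rw [smul_mul_assoc]
    rw [sum_congr rfl h2, show M = (M-1)+1 by omega, Finset.sum_range_succ',
      Finset.sum_range_succ]
    rw [brMz y, smul_zero, add_zero, pow_zero, hbr1', smul_zero, add_zero]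
    apply sum_congr rfl
    intro i _
    rw [brpow i y, smul_smul, hfc i]
  have bre : ∀ y : B, br (∑ n ∈ range M, ((n.factorial : ℚ))⁻¹ • c ^ n) y
      = (∑ n ∈ range M, ((n.factorial : ℚ))⁻¹ • c ^ n) * br c y := by
    intro y
    have h1 : br (∑ n ∈ range M, ((n.factorial : ℚ))⁻¹ • c ^ n) y
        = ∑ n ∈ range M, ((n.factorial : ℚ))⁻¹ • br (c^n) y := by
      rw [map_sum, LinearMap.sum_apply]
      apply sum_congr rfl
      intro n _
      rw [map_smul, LinearMap.smul_apply]
    rw [h1, Finset.sum_mul]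
    have h2 : ∀ n ∈ range M, (((n.factorial : ℚ))⁻¹ • c ^ n) * br c y
        = ((n.factorial : ℚ))⁻¹ • (c^n * br c y) := by
      intro n _
      rw [smul_mul_assoc]
    rw [sum_congr rfl h2, show M = (M-1)+1 by omega, Finset.sum_range_succ',
      Finset.sum_range_succ]
    rw [brMz y, smul_zero, add_zero, pow_zero, hbr1', smul_zero, add_zero]
    apply sum_congr rfl
    intro i _
    rw [brpow i y, smul_smul, hfc i]
  -- final assembly
  intro a
  rw [hT a, hT (p a), hp, peq0, pE a, bre, zero_mul, mul_add]
  ring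
end
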